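/- arXiv:1801.07386 — 4 statements merged into one kernel-verified Lean document; each statement's English description precedes it below -/
import Mathlib

section
/- Let G be a connected weighted graph on n ≥ 2 vertices with Laplacian L, and let R ∈ ℝ^{n×n} be its effective resistance matrix, i.e. R_{u,v} = r_G(u,v) for all vertices u, v. Then L = −2 · [ (I − J/n) R (I − J/n) ]⁺, where I is the n×n identity, J is the n×n all-ones matrix, and ⁺ denotes the Moore–Penrose pseudoinverse. In particular, the Laplacian of a connected weighted graph is determined by its full set of pairwise effective resistances. -/
open Matrix BigOperators Polynomial Filter Topology

/-- The four Penrose conditions characterizing the Moore–Penrose pseudoinverse. -/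
def IsMoorePenrose {m k : Type*} [Fintype m] [Fintype k] (M : Matrix m k ℝ)
    (P : Matrix k m ℝ) : Prop :=
  M * P * M = M ∧ P * M * P = P ∧ (M * P)ᵀ = M * P ∧ (P * M)ᵀ = P * M

/- The Moore–Penrose pseudoinverse `M⁺`: it always exists and is unique, so this
choice-based definition picks out exactly the Moore–Penrose pseudoinverse. -/
open Classical in
noncomputable def pinv {m k : Type*} [Fintype m] [Fintype k] (M : Matrix m k ℝ) :
    Matrix k m ℝ :=
  if h : ∃ P, IsMoorePenrose M P then h.choose else 0

lemma mp_unique {m k : Type*} [Fintype m] [Fintype k] {M : Matrix m k ℝ}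
    {P Q : Matrix k m ℝ} (hP : IsMoorePenrose M P) (hQ : IsMoorePenrose M Q) : P = Q := by
  obtain ⟨hP1, hP2, hP3, hP4⟩ := hP
  obtain ⟨hQ1, hQ2, hQ3, hQ4⟩ := hQ
  have h1 : M * P = M * Q := by
    calc M * P = (M * P)ᵀ := hP3.symm
      _ = ((M * Q * M) * P)ᵀ := by rw [hQ1]
      _ = ((M * Q) * (M * P))ᵀ := by rw [Matrix.mul_assoc (M * Q)]
      _ = (M * P)ᵀ * (M * Q)ᵀ := by rw [transpose_mul]
      _ = (M * P) * (M * Q) := by rw [hP3, hQ3]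
      _ = (M * P * M) * Q := by rw [Matrix.mul_assoc (M * P)]
      _ = M * Q := by rw [hP1]
  have h2 : P * M = Q * M := by
    calc P * M = (P * M)ᵀ := hP4.symm
      _ = (P * (M * Q * M))ᵀ := by rw [hQ1]
      _ = ((P * M) * (Q * M))ᵀ := by
            rw [Matrix.mul_assoc M Q M, ← Matrix.mul_assoc P M (Q * M)]
      _ = (Q * M)ᵀ * (P * M)ᵀ := by rw [transpose_mul]
      _ = (Q * M) * (P * M) := by rw [hP4, hQ4]
      _ = Q * (M * P * M) := by rw [Matrix.mul_assoc Q, Matrix.mul_assoc M P M]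
      _ = Q * M := by rw [hP1]
  calc P = P * M * P := hP2.symm
    _ = Q * M * P := by rw [h2]
    _ = Q * (M * P) := by rw [Matrix.mul_assoc]
    _ = Q * (M * Q) := by rw [h1]
    _ = Q * M * Q := by rw [Matrix.mul_assoc]
    _ = Q := hQ2

lemma pinv_eq {m k : Type*} [Fintype m] [Fintype k] {M : Matrix m k ℝ}
    {P : Matrix k m ℝ} (h : IsMoorePenrose M P) : pinv M = P := by
  rw [pinv, dif_pos ⟨P, h⟩]
  exact mp_unique (Exists.choose_spec (⟨P, h⟩ : ∃ P, IsMoorePenrose M P)) h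

lemma exists_mp_of_symm {n : Type*} [Fintype n] [DecidableEq n] {M : Matrix n n ℝ}
    (h : Mᵀ = M) : ∃ P, IsMoorePenrose M P := by
  have hH : M.IsHermitian := by
    rwa [Matrix.IsHermitian, conjTranspose_eq_transpose_of_trivial]
  set U : Matrix n n ℝ := (hH.eigenvectorUnitary : Matrix n n ℝ) with hU
  set e := hH.eigenvalues with he
  have hUU : U * star U = 1 := (Matrix.mem_unitaryGroup_iff).mp hH.eigenvectorUnitary.2
  have hUU' : star U * U = 1 := (Matrix.mem_unitaryGroup_iff').mp hH.eigenvectorUnitary.2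
  have hspec : M = U * diagonal e * star U := by
    have := hH.spectral_theorem
    simpa using this
  set g : n → ℝ := fun i => if e i = 0 then 0 else (e i)⁻¹ with hg
  have key : ∀ f f' : n → ℝ, (U * diagonal f * star U) * (U * diagonal f' * star U)
      = U * diagonal (fun i => f i * f' i) * star U := by
    intro f f'
    calc (U * diagonal f * star U) * (U * diagonal f' * star U)
        = U * diagonal f * (star U * U) * (diagonal f' * star U) := by
          simp only [Matrix.mul_assoc]
      _ = U * (diagonal f * diagonal f') * star U := by
          rw [hUU']; simp only [mul_one, Matrix.mul_assoc]
      _ = U * diagonal (fun i => f i * f' i) * star U := by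
          rw [diagonal_mul_diagonal]
  have hsymmN : ∀ f : n → ℝ, (U * diagonal f * star U)ᵀ = U * diagonal f * star U := by
    intro f
    have : star U = Uᵀ := conjTranspose_eq_transpose_of_trivial U
    rw [this, transpose_mul, transpose_mul, transpose_transpose, diagonal_transpose, Matrix.mul_assoc]
  have hege : (fun i => e i * g i * e i) = e := by
    funext i
    by_cases hi : e i = 0
    · simp [hg, hi]
    · simp only [hg, if_neg hi]
      field_simp
  have hgeg : (fun i => g i * e i * g i) = g := by
    funext i
    by_cases hi : e i = 0
    · simp [hg, hi]
    · simp only [hg, if_neg hi]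
      field_simp
  refine ⟨U * diagonal g * star U, ?_, ?_, ?_, ?_⟩
  · rw [hspec]; simp only [key]; rw [hege]
  · rw [hspec]; simp only [key]; rw [hgeg]
  · rw [hspec]; simp only [key]; exact hsymmN _
  · rw [hspec]; simp only [key]; exact hsymmN _

lemma pinv_isMP {m k : Type*} [Fintype m] [Fintype k] {M : Matrix m k ℝ}
    (h : ∃ P, IsMoorePenrose M P) : IsMoorePenrose M (pinv M) := by
  rw [pinv, dif_pos h]; exact h.choose_spec

lemma mp_transpose {m k : Type*} [Fintype m] [Fintype k] {M : Matrix m k ℝ}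
    {P : Matrix k m ℝ} (h : IsMoorePenrose M P) : IsMoorePenrose Mᵀ Pᵀ := by
  obtain ⟨h1, h2, h3, h4⟩ := h
  refine ⟨?_, ?_, ?_, ?_⟩
  · rw [← transpose_mul, ← transpose_mul, ← Matrix.mul_assoc, h1]
  · rw [← transpose_mul, ← transpose_mul, ← Matrix.mul_assoc, h2]
  · rw [← transpose_mul, transpose_transpose]; exact h4.symm
  · rw [← transpose_mul, transpose_transpose]; exact h3.symm

/-- The Laplacian `L = D - A` of the weighted graph with adjacency matrix `A`. -/
noncomputable def lapl {n : ℕ} (A : Matrix (Fin n) (Fin n) ℝ) : Matrix (Fin n) (Fin n) ℝ :=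
  Matrix.diagonal (fun u => ∑ v, A u v) - A

/-- Connectivity of the weighted graph with adjacency matrix `A`: the simple graph with an
edge `{u,v}` whenever `A u v > 0` is connected. -/
def AdjConnected {n : ℕ} (A : Matrix (Fin n) (Fin n) ℝ) : Prop :=
  (SimpleGraph.fromRel fun u v => 0 < A u v).Connected

/-- The effective resistance `r_G(u,v) = χ_{u,v}ᵀ L⁺ χ_{u,v}` where `χ_{u,v} = e_u - e_v`. -/
noncomputable def effRes {n : ℕ} (A : Matrix (Fin n) (Fin n) ℝ) (u v : Fin n) : ℝ :=
  (Pi.single u 1 - Pi.single v 1) ⬝ᵥ (pinv (lapl A) *ᵥ (Pi.single u 1 - Pi.single v 1))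

/-- The all-ones matrix `J`. -/
def allOnes (n : ℕ) : Matrix (Fin n) (Fin n) ℝ := Matrix.of fun _ _ => 1

/-- For a connected weighted graph on `n ≥ 2` vertices with Laplacian `L`
and effective resistance matrix `R`, one has `L = -2 ⬝ [(I - J/n) R (I - J/n)]⁺`; in
particular the Laplacian is determined by the full set of pairwise effective resistances. -/
theorem stmt1 {n : ℕ} (hn : 2 ≤ n) (A R : Matrix (Fin n) (Fin n) ℝ)
    (hsymm : A.IsSymm) (hnonneg : ∀ u v, 0 ≤ A u v) (hdiag : ∀ u, A u u = 0)
    (hconn : AdjConnected A)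
    (hR : ∀ u v, R u v = effRes A u v) :
    lapl A = (-2 : ℝ) • pinv
      ((1 - (n : ℝ)⁻¹ • allOnes n) * R * (1 - (n : ℝ)⁻¹ • allOnes n)) := by
  have hnR : (n : ℝ) ≠ 0 := Nat.cast_ne_zero.mpr (by omega)
  set c : ℝ := (n : ℝ)⁻¹ with hc
  set J : Matrix (Fin n) (Fin n) ℝ := allOnes n with hJ
  set L : Matrix (Fin n) (Fin n) ℝ := lapl A with hLd
  set M : Matrix (Fin n) (Fin n) ℝ := pinv L with hMd
  have hLs : Lᵀ = L := by
    rw [hLd, lapl, transpose_sub, diagonal_transpose, hsymm.eq]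
  have hex : ∃ P, IsMoorePenrose L P := exists_mp_of_symm hLs
  obtain ⟨h1, h2, h3, h4⟩ := pinv_isMP hex
  rw [← hMd] at h1 h2 h3 h4
  have hMs : Mᵀ = M := by
    refine mp_unique ?_ ⟨h1, h2, h3, h4⟩
    have := mp_transpose (⟨h1, h2, h3, h4⟩ : IsMoorePenrose L M)
    rwa [hLs] at this
  have hJs : Jᵀ = J := by ext u v; simp [hJ, allOnes]
  have hLJ : L * J = 0 := by
    ext u v
    rw [Matrix.mul_apply]
    simp only [hLd, lapl, Matrix.sub_apply, hJ, allOnes, Matrix.of_apply, mul_one,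
      Matrix.zero_apply]
    rw [Finset.sum_sub_distrib]
    simp [Matrix.diagonal_apply]
  have hJL : J * L = 0 := by
    have := congrArg Matrix.transpose hLJ
    rwa [transpose_mul, hLs, hJs, transpose_zero] at this
  have hMML : M = M * Mᵀ * L := by
    calc M = M * (L * M) := by rw [← Matrix.mul_assoc, h2]
      _ = M * (L * M)ᵀ := by rw [h3]
      _ = M * (Mᵀ * Lᵀ) := by rw [transpose_mul]
      _ = M * Mᵀ * L := by rw [hLs, Matrix.mul_assoc]
  have hMJ : M * J = 0 := by
    calc M * J = (M * Mᵀ * L) * J := by rw [← hMML]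
      _ = M * Mᵀ * (L * J) := by rw [Matrix.mul_assoc]
      _ = 0 := by rw [hLJ, Matrix.mul_zero]
  have hJM : J * M = 0 := by
    have := congrArg Matrix.transpose hMJ
    rwa [transpose_mul, hJs, hMs, transpose_zero] at this
  set d : Fin n → ℝ := fun u => M u u with hd
  set one : Fin n → ℝ := fun _ => (1 : ℝ) with hone
  have hRent : ∀ u v, R u v = M u u + M v v - 2 * M u v := by
    intro u v
    have hMvu : M v u = M u v := by
      have := congrFun (congrFun hMs u) v
      simpa [Matrix.transpose_apply] using this
    rw [hR]
    simp only [effRes, ← hLd, ← hMd, sub_dotProduct, Matrix.mulVec_sub,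
      dotProduct_sub]
    simp [Matrix.mulVec_single, single_dotProduct, hMvu]
    ring
  have hRmat : R = vecMulVec d one + vecMulVec one d - (2 : ℝ) • M := by
    ext u v
    simp only [Matrix.sub_apply, Matrix.add_apply, Matrix.vecMulVec_apply, Matrix.smul_apply,
      smul_eq_mul, hd, hone, hRent u v]
    ring
  have hcol : ∀ v, ∑ w, (1 - c • J) w v = 0 := by
    intro v
    simp only [Matrix.sub_apply, Matrix.smul_apply, hJ, allOnes, Matrix.of_apply,
      smul_eq_mul, mul_one, Matrix.one_apply]
    rw [Finset.sum_sub_distrib]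
    simp [Finset.sum_ite_eq, hc, hnR]
  have hrow : ∀ u, ∑ w, (1 - c • J) u w = 0 := by
    intro u
    simp only [Matrix.sub_apply, Matrix.smul_apply, hJ, allOnes, Matrix.of_apply,
      smul_eq_mul, mul_one, Matrix.one_apply]
    rw [Finset.sum_sub_distrib]
    simp [Finset.sum_ite_eq', hc, hnR]
  have t1 : vecMulVec d one * (1 - c • J) = 0 := by
    ext u v
    rw [Matrix.mul_apply]
    simp only [Matrix.vecMulVec_apply, hone, mul_one, Matrix.zero_apply]
    rw [← Finset.mul_sum, hcol v, mul_zero]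
  have t2 : (1 - c • J) * vecMulVec one d = 0 := by
    ext u v
    rw [Matrix.mul_apply]
    simp only [Matrix.vecMulVec_apply, hone, one_mul, Matrix.zero_apply]
    rw [← Finset.sum_mul, hrow u, zero_mul]
  have hPiM : (1 - c • J) * M = M := by
    rw [Matrix.sub_mul, Matrix.one_mul, Matrix.smul_mul, hJM, smul_zero, sub_zero]
  have hMPi : M * (1 - c • J) = M := by
    rw [Matrix.mul_sub, Matrix.mul_one, Matrix.mul_smul, hMJ, smul_zero, sub_zero]
  have hPRP : (1 - c • J) * R * (1 - c • J) = (-2 : ℝ) • M := by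
    rw [hRmat]
    revert t1 t2 hPiM hMPi
    generalize (1 - c • J) = Q
    intro t1 t2 hPiM hMPi
    rw [Matrix.mul_sub, Matrix.mul_add, Matrix.sub_mul, Matrix.add_mul,
      Matrix.mul_assoc Q (vecMulVec d one), t1, t2, Matrix.mul_zero, Matrix.zero_mul,
      Matrix.mul_smul, Matrix.smul_mul, hPiM, hMPi]
    module
  have hKey : IsMoorePenrose ((-2 : ℝ) • M) ((-(2 : ℝ)⁻¹) • L) := by
    refine ⟨?_, ?_, ?_, ?_⟩
    · simp only [Matrix.smul_mul, Matrix.mul_smul, smul_smul, h2]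
      norm_num
    · simp only [Matrix.smul_mul, Matrix.mul_smul, smul_smul, h1]
      norm_num
    · simp only [Matrix.smul_mul, Matrix.mul_smul, smul_smul, transpose_smul, h3, h4]
    · simp only [Matrix.smul_mul, Matrix.mul_smul, smul_smul, transpose_smul, h3, h4]
  rw [hPRP, pinv_eq hKey, smul_smul]
  norm_num
end

section
/- Let G and G' be connected weighted graphs on the same vertex set {1,…,n}, n ≥ 2, with adjacency matrices A and A'. If r_G(u,v) = r_{G'}(u,v) for all pairs of vertices u, v, then A = A'. That is, a connected weighted graph is uniquely determined by its full set of pairwise effective resistances. -/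
open Matrix BigOperators Polynomial Filter Topology

/-!
The resistances are the values `P u u + P v v - P u v - P v u` of `P = L⁺`. As `L` is
symmetric with `L 𝟙 = 0`, so is `P`, and such a `P` is determined by these values: summing
over `v` gives `n P u u + tr P`, summing once more gives `2 n tr P`. Finally `L = P⁺`, and `A`
is the negated off-diagonal part of `L`.
-/

namespace IsMoorePenrose

variable {m k : Type*} [Fintype m] [Fintype k] {M : Matrix m k ℝ} {P Q : Matrix k m ℝ}

theorem symm (h : IsMoorePenrose M P) : IsMoorePenrose P M :=
  ⟨h.2.1, h.1, h.2.2.2, h.2.2.1⟩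

theorem transpose (h : IsMoorePenrose M P) : IsMoorePenrose Mᵀ Pᵀ := by
  obtain ⟨h1, h2, h3, h4⟩ := h
  refine ⟨?_, ?_, ?_, ?_⟩
  · rw [← transpose_mul, ← transpose_mul, ← Matrix.mul_assoc, h1]
  · rw [← transpose_mul, ← transpose_mul, ← Matrix.mul_assoc, h2]
  · rw [← transpose_mul, transpose_transpose, h4]
  · rw [← transpose_mul, transpose_transpose, h3]

theorem unique (hP : IsMoorePenrose M P) (hQ : IsMoorePenrose M Q) : P = Q := by
  obtain ⟨p1, p2, p3, p4⟩ := hP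
  obtain ⟨q1, q2, q3, q4⟩ := hQ
  have hMt : Mᵀ = Mᵀ * Qᵀ * Mᵀ := by
    conv_lhs => rw [← q1]
    rw [transpose_mul, transpose_mul, ← Matrix.mul_assoc]
  have hMP : M * P = M * Q := by
    calc M * P = Pᵀ * Mᵀ := by rw [← transpose_mul, p3]
    _ = Pᵀ * (Mᵀ * Qᵀ * Mᵀ) := by rw [← hMt]
    _ = (M * P)ᵀ * (M * Q)ᵀ := by simp only [transpose_mul, Matrix.mul_assoc]
    _ = M * P * M * Q := by rw [p3, q3]; simp only [Matrix.mul_assoc]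
    _ = M * Q := by rw [p1]
  have hPM : P * M = Q * M := by
    calc P * M = Mᵀ * Pᵀ := by rw [← transpose_mul, p4]
    _ = (Mᵀ * Qᵀ * Mᵀ) * Pᵀ := by rw [← hMt]
    _ = (Q * M)ᵀ * (P * M)ᵀ := by simp only [transpose_mul, Matrix.mul_assoc]
    _ = Q * (M * P * M) := by rw [p4, q4]; simp only [Matrix.mul_assoc]
    _ = Q * M := by rw [p1]
  calc P = P * M * P := p2.symm
  _ = Q * M * Q := by rw [Matrix.mul_assoc, hMP, ← Matrix.mul_assoc, hPM]
  _ = Q := q2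

theorem mulVec_eq_zero (h : IsMoorePenrose M P) {x : m → ℝ} (hx : Mᵀ *ᵥ x = 0) :
    P *ᵥ x = 0 := by
  have hP : P = P * Pᵀ * Mᵀ := by
    rw [Matrix.mul_assoc, ← transpose_mul, h.2.2.1, ← Matrix.mul_assoc, h.2.1]
  rw [hP, ← mulVec_mulVec, hx, mulVec_zero]

theorem pinv_eq (h : IsMoorePenrose M P) : pinv M = P := by
  have he : ∃ Q, IsMoorePenrose M Q := ⟨P, h⟩
  rw [pinv, dif_pos he]
  exact he.choose_spec.unique h

end IsMoorePenrose

namespace Matrix.IsSymm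

variable {ι : Type*} [Fintype ι] [DecidableEq ι] {M : Matrix ι ι ℝ}

-- `t * t⁻¹ * t = t` also holds at `t = 0`, so the Penrose identities hold eigenvalue by
-- eigenvalue.
theorem isMoorePenrose_cfc_inv (hM : M.IsSymm) :
    IsMoorePenrose M (cfc (fun x : ℝ => x⁻¹) M) := by
  have hM' : IsSelfAdjoint M := isHermitian_iff_isSymm.mpr hM
  have hmul (f g : ℝ → ℝ) : cfc f M * cfc g M = cfc (fun x => f x * g x) M :=
    (cfc_mul f g M ((finite_spectrum M).continuousOn f) ((finite_spectrum M).continuousOn g)).symm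
  have hMP : M * cfc (fun x : ℝ => x⁻¹) M = cfc (fun x : ℝ => x * x⁻¹) M := by
    nth_rw 1 [← cfc_id' ℝ M]
    exact hmul _ _
  have hPM : cfc (fun x : ℝ => x⁻¹) M * M = cfc (fun x : ℝ => x⁻¹ * x) M := by
    nth_rw 2 [← cfc_id' ℝ M]
    exact hmul _ _
  refine ⟨?_, ?_, ?_, ?_⟩
  · rw [hMP]
    nth_rw 2 [← cfc_id' ℝ M]
    rw [hmul]
    simp only [mul_inv_mul_cancel, cfc_id' ℝ M]
  · rw [hPM, hmul]
    congr 1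
    funext x
    simpa using mul_inv_mul_cancel x⁻¹
  · exact hMP ▸ isHermitian_iff_isSymm.mp (cfc_predicate _ M)
  · exact hPM ▸ isHermitian_iff_isSymm.mp (cfc_predicate _ M)

theorem isMoorePenrose_pinv (hM : M.IsSymm) : IsMoorePenrose M (pinv M) := by
  rw [hM.isMoorePenrose_cfc_inv.pinv_eq]
  exact hM.isMoorePenrose_cfc_inv

theorem pinv_pinv (hM : M.IsSymm) : pinv (pinv M) = M :=
  hM.isMoorePenrose_pinv.symm.pinv_eq

theorem pinv_isSymm (hM : M.IsSymm) : (pinv M).IsSymm := by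
  have h := hM.isMoorePenrose_pinv.transpose
  rw [hM.eq] at h
  exact h.unique hM.isMoorePenrose_pinv

theorem pinv_mulVec_eq_zero (hM : M.IsSymm) {x : ι → ℝ} (hx : M *ᵥ x = 0) :
    pinv M *ᵥ x = 0 :=
  hM.isMoorePenrose_pinv.mulVec_eq_zero (hM.eq.symm ▸ hx)

end Matrix.IsSymm

namespace Matrix

def resistanceForm {ι R : Type*} [Sub R] [Add R] (Q : Matrix ι ι R) (u v : ι) : R :=
  Q u u + Q v v - Q u v - Q v u

theorem resistanceForm_sub {ι R : Type*} [CommRing R] (P Q : Matrix ι ι R) (u v : ι) :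
    (P - Q).resistanceForm u v = P.resistanceForm u v - Q.resistanceForm u v := by
  simp only [resistanceForm, sub_apply]
  ring

theorem single_sub_single_dotProduct_mulVec {ι R : Type*} [Fintype ι] [DecidableEq ι]
    [CommRing R] (Q : Matrix ι ι R) (u v : ι) :
    (Pi.single u 1 - Pi.single v 1) ⬝ᵥ (Q *ᵥ (Pi.single u 1 - Pi.single v 1)) =
      Q.resistanceForm u v := by
  rw [mulVec_sub, mulVec_single_one, mulVec_single_one, sub_dotProduct, single_dotProduct,
    single_dotProduct, resistanceForm]
  simp only [Pi.sub_apply, one_mul, col_apply]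
  ring

theorem IsSymm.sum_resistanceForm {ι R : Type*} [Fintype ι] [CommRing R] {Q : Matrix ι ι R}
    (hQ : Q.IsSymm) (h1 : Q *ᵥ 1 = 0) (u : ι) :
    ∑ v, Q.resistanceForm u v = Fintype.card ι * Q u u + Q.trace := by
  have hrow : ∑ v, Q u v = 0 := by simpa [mulVec, dotProduct] using congrFun h1 u
  have hcol : ∑ v, Q v u = 0 := by simpa only [hQ.apply u] using hrow
  simp only [resistanceForm, Finset.sum_sub_distrib, Finset.sum_add_distrib, hrow, hcol,
    Finset.sum_const, Finset.card_univ, nsmul_eq_mul, trace, diag_apply]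
  ring

variable {ι K : Type*} [Fintype ι] [Field K] [CharZero K] {P Q : Matrix ι ι K}

theorem IsSymm.eq_zero_of_resistanceForm_eq_zero (hQ : Q.IsSymm) (h1 : Q *ᵥ 1 = 0)
    (h : ∀ u v, Q.resistanceForm u v = 0) : Q = 0 := by
  have hdiag (u : ι) : Fintype.card ι * Q u u + Q.trace = 0 := by
    rw [← hQ.sum_resistanceForm h1]
    exact Finset.sum_eq_zero fun v _ => h u v
  ext u v
  have : Nonempty ι := ⟨u⟩
  have hcard : (Fintype.card ι : K) ≠ 0 := Nat.cast_ne_zero.mpr Fintype.card_ne_zero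
  have htrace : Q.trace = 0 := by
    have h2 : (2 * Fintype.card ι : K) * Q.trace = 0 := by
      rw [← Finset.sum_eq_zero (s := Finset.univ) fun u _ => hdiag u]
      simp only [Finset.sum_add_distrib, ← Finset.mul_sum, Finset.sum_const, Finset.card_univ,
        nsmul_eq_mul, trace, diag_apply]
      ring
    exact (mul_eq_zero.mp h2).resolve_left (mul_ne_zero two_ne_zero hcard)
  have hdiag_zero (w : ι) : Q w w = 0 := by
    simpa [htrace, hcard] using hdiag w
  have h2 : 2 * Q u v = 0 := by
    have := h u v
    rw [resistanceForm, hdiag_zero, hdiag_zero, hQ.apply u v] at this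
    linear_combination -this
  simpa using h2

theorem IsSymm.eq_of_resistanceForm_eq (hP : P.IsSymm) (hQ : Q.IsSymm)
    (hP1 : P *ᵥ 1 = 0) (hQ1 : Q *ᵥ 1 = 0)
    (h : ∀ u v, P.resistanceForm u v = Q.resistanceForm u v) : P = Q := by
  refine sub_eq_zero.mp ((hP.sub hQ).eq_zero_of_resistanceForm_eq_zero ?_ fun u v => ?_)
  · rw [sub_mulVec, hP1, hQ1, sub_zero]
  · rw [resistanceForm_sub, h, sub_self]

end Matrix

section Laplacian

variable {n : ℕ} {A A' : Matrix (Fin n) (Fin n) ℝ}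

theorem lapl_isSymm (hA : A.IsSymm) : (lapl A).IsSymm :=
  (isSymm_diagonal _).sub hA

theorem lapl_mulVec_one (A : Matrix (Fin n) (Fin n) ℝ) : lapl A *ᵥ 1 = 0 := by
  ext u
  rw [lapl, sub_mulVec, Pi.sub_apply, mulVec_diagonal]
  simp [mulVec, dotProduct]

theorem effRes_eq_resistanceForm (A : Matrix (Fin n) (Fin n) ℝ) (u v : Fin n) :
    effRes A u v = (pinv (lapl A)).resistanceForm u v :=
  single_sub_single_dotProduct_mulVec _ u v

theorem eq_of_lapl_eq (hA : ∀ u, A u u = 0) (hA' : ∀ u, A' u u = 0) (h : lapl A = lapl A') :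
    A = A' := by
  ext u v
  obtain rfl | huv := eq_or_ne u v
  · rw [hA, hA']
  · simpa [lapl, diagonal_apply_ne _ huv] using congrFun (congrFun h u) v

end Laplacian

theorem stmt2_general {n : ℕ} (A A' : Matrix (Fin n) (Fin n) ℝ)
    (hsymm : A.IsSymm) (hdiag : ∀ u, A u u = 0)
    (hsymm' : A'.IsSymm) (hdiag' : ∀ u, A' u u = 0)
    (hres : ∀ u v, effRes A u v = effRes A' u v) :
    A = A' := by
  have hL := lapl_isSymm hsymm
  have hL' := lapl_isSymm hsymm'
  have hP : pinv (lapl A) = pinv (lapl A') :=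
    hL.pinv_isSymm.eq_of_resistanceForm_eq hL'.pinv_isSymm
      (hL.pinv_mulVec_eq_zero (lapl_mulVec_one A)) (hL'.pinv_mulVec_eq_zero (lapl_mulVec_one A'))
      fun u v => by simpa only [effRes_eq_resistanceForm] using hres u v
  refine eq_of_lapl_eq hdiag hdiag' ?_
  rw [← hL.pinv_pinv, hP, hL'.pinv_pinv]

/-- A connected weighted graph on `n ≥ 2` vertices is uniquely determined
by its full set of pairwise effective resistances. -/
theorem stmt2 {n : ℕ} (hn : 2 ≤ n) (A A' : Matrix (Fin n) (Fin n) ℝ)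
    (hsymm : A.IsSymm) (hnonneg : ∀ u v, 0 ≤ A u v) (hdiag : ∀ u, A u u = 0)
    (hconn : AdjConnected A)
    (hsymm' : A'.IsSymm) (hnonneg' : ∀ u v, 0 ≤ A' u v) (hdiag' : ∀ u, A' u u = 0)
    (hconn' : AdjConnected A')
    (hres : ∀ u v, effRes A u v = effRes A' u v) :
    A = A' :=
  stmt2_general A A' hsymm hdiag hsymm' hdiag' hres
end

section
/- Fix α ∈ (0,1). Let G and G' be connected weighted graphs on the same vertex set {1,…,n}, n ≥ 2, with adjacency matrices A and A' and with every vertex having positive weighted degree. If the personalized PageRank scores agree for all ordered pairs of vertices, i.e. p^α_G(u,v) = p^α_{G'}(u,v) for all u, v ∈ {1,…,n}, then there exists a constant c > 0 such that A' = c·A; that is, a connected weighted graph is determined up to a uniform scaling of its edge weights by its full set of personalized PageRank scores. -/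
open Matrix BigOperators

/-- The lazy random walk matrix `W = (1/2)(I + A D⁻¹)`. -/
noncomputable def lazyW {n : ℕ} (A : Matrix (Fin n) (Fin n) ℝ) : Matrix (Fin n) (Fin n) ℝ :=
  (1 / 2 : ℝ) • (1 + A * Matrix.diagonal fun u => (∑ v, A u v)⁻¹)

/-- The personalized PageRank vector `p^α(u) = α (I - (1-α) W)⁻¹ e_u`. -/
noncomputable def pprVec {n : ℕ} (A : Matrix (Fin n) (Fin n) ℝ) (α : ℝ) (u : Fin n) :
    Fin n → ℝ :=
  α • ((1 - (1 - α) • lazyW A)⁻¹ *ᵥ Pi.single u 1)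

lemma stmt17_entry {n : ℕ} (α : ℝ) (A : Matrix (Fin n) (Fin n) ℝ) (i k : Fin n) :
    (1 - (1 - α) • lazyW A) i k =
      (if i = k then (1 : ℝ) else 0) -
        (1 - α) * ((1/2) * ((if i = k then (1:ℝ) else 0) + A i k * (∑ v, A k v)⁻¹)) := by
  simp [lazyW, Matrix.sub_apply, Matrix.smul_apply, Matrix.add_apply, Matrix.one_apply,
    Matrix.mul_diagonal, smul_eq_mul]
  split_ifs <;> ring

lemma stmt17_det_ne {n : ℕ} (α : ℝ) (hα : α ∈ Set.Ioo (0 : ℝ) 1)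
    (A : Matrix (Fin n) (Fin n) ℝ)
    (hsymm : A.IsSymm) (hnonneg : ∀ u v, 0 ≤ A u v) (hdiag : ∀ u, A u u = 0)
    (hdeg : ∀ u, 0 < ∑ v, A u v) :
    (1 - (1 - α) • lazyW A).det ≠ 0 := by
  obtain ⟨hα0, hα1⟩ := hα
  apply det_ne_zero_of_sum_col_lt_diag
  intro k
  have hcol : ∑ i, A i k = ∑ v, A k v := by
    refine Finset.sum_congr rfl fun i _ => ?_
    have := congrFun (congrFun hsymm i) k
    simpa [Matrix.transpose_apply] using this.symm
  have hsum : ∑ i ∈ Finset.univ.erase k, ‖(1 - (1 - α) • lazyW A) i k‖ = (1 - α) / 2 := by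
    have h1 : ∀ i ∈ Finset.univ.erase k,
        ‖(1 - (1 - α) • lazyW A) i k‖ = (1 - α) / 2 * (A i k * (∑ v, A k v)⁻¹) := by
      intro i hi
      have hik : i ≠ k := Finset.ne_of_mem_erase hi
      rw [stmt17_entry]
      simp only [if_neg hik]
      have hnn : 0 ≤ (1 - α) * (1/2 * (0 + A i k * (∑ v, A k v)⁻¹)) :=
        mul_nonneg (by linarith) (mul_nonneg (by norm_num)
          (by simpa using mul_nonneg (hnonneg i k) (inv_nonneg.mpr (hdeg k).le)))
      rw [zero_sub, norm_neg, Real.norm_eq_abs, abs_of_nonneg hnn]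
      ring
    rw [Finset.sum_congr rfl h1, ← Finset.mul_sum, ← Finset.sum_mul]
    have : ∑ i ∈ Finset.univ.erase k, A i k = ∑ v, A k v := by
      rw [Finset.sum_erase _ (by simpa using hdiag k), hcol]
    rw [this, mul_inv_cancel₀ (hdeg k).ne', mul_one]
  rw [hsum, stmt17_entry]
  simp only [hdiag, zero_mul, add_zero, mul_one, if_pos rfl, eq_self_iff_true, if_true]
  rw [Real.norm_eq_abs, abs_of_pos (by linarith)]
  linarith

/-- Fix `α ∈ (0,1)`. If two connected weighted graphs on the same
vertex set (with all weighted degrees positive) have the same personalized PageRank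
scores `p^α(u,v)` for all ordered pairs `(u,v)`, then their adjacency matrices agree up
to a positive uniform scaling of the edge weights. -/
theorem stmt17 {n : ℕ} (hn : 2 ≤ n) (α : ℝ) (hα : α ∈ Set.Ioo (0 : ℝ) 1)
    (A A' : Matrix (Fin n) (Fin n) ℝ)
    (hsymm : A.IsSymm) (hnonneg : ∀ u v, 0 ≤ A u v) (hdiag : ∀ u, A u u = 0)
    (hconn : AdjConnected A) (hdeg : ∀ u, 0 < ∑ v, A u v)
    (hsymm' : A'.IsSymm) (hnonneg' : ∀ u v, 0 ≤ A' u v) (hdiag' : ∀ u, A' u u = 0)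
    (hconn' : AdjConnected A') (hdeg' : ∀ u, 0 < ∑ v, A' u v)
    (hppr : ∀ u v : Fin n, pprVec A α u v = pprVec A' α u v) :
    ∃ c : ℝ, 0 < c ∧ A' = c • A := by
  obtain ⟨hα0, hα1⟩ := hα
  set M := 1 - (1 - α) • lazyW A with hM
  set M' := 1 - (1 - α) • lazyW A' with hM'
  have hdet : M.det ≠ 0 := stmt17_det_ne α ⟨hα0, hα1⟩ A hsymm hnonneg hdiag hdeg
  have hdet' : M'.det ≠ 0 := stmt17_det_ne α ⟨hα0, hα1⟩ A' hsymm' hnonneg' hdiag' hdeg'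
  -- inverses are equal
  have hinv : M⁻¹ = M'⁻¹ := by
    ext i j
    have := hppr j i
    simp only [pprVec, Pi.smul_apply, smul_eq_mul] at this
    have h2 := mul_left_cancel₀ hα0.ne' this
    simpa [Matrix.mulVec_single] using h2
  have hMM : M = M' := Matrix.inv_inj hinv (isUnit_iff_ne_zero.mpr hdet)
  have hW : lazyW A = lazyW A' := by
    have h1 : (1 - α) • lazyW A = (1 - α) • lazyW A' := sub_right_injective hMM
    exact smul_right_injective _ (by linarith : (1:ℝ) - α ≠ 0) h1
  have hAD : ∀ i k, A i k * (∑ v, A k v)⁻¹ = A' i k * (∑ v, A' k v)⁻¹ := by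
    intro i k
    have h1 := congrFun (congrFun hW i) k
    simp only [lazyW, Matrix.smul_apply, Matrix.add_apply, Matrix.mul_diagonal,
      smul_eq_mul] at h1
    have h2 := mul_left_cancel₀ (by norm_num : (1/2 : ℝ) ≠ 0) h1
    exact add_left_cancel h2
  set c : Fin n → ℝ := fun k => (∑ v, A' k v) / (∑ v, A k v) with hc
  have hcpos : ∀ k, 0 < c k := fun k => div_pos (hdeg' k) (hdeg k)
  have hkey : ∀ i k, A' i k = c k * A i k := by
    intro i k
    have h := hAD i k
    rw [hc]
    field_simp [(hdeg k).ne', (hdeg' k).ne'] at h ⊢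
    linarith [h]
  -- adjacency implies equal c
  have hadj : ∀ u v : Fin n, (SimpleGraph.fromRel fun u v => 0 < A u v).Adj u v →
      c u = c v := by
    intro u v h
    obtain ⟨hne, h⟩ := h
    have hpos : 0 < A u v := by
      rcases h with h | h
      · exact h
      · have := congrFun (congrFun hsymm u) v
        simpa [Matrix.transpose_apply] using this ▸ h
    have e1 : A' u v = c v * A u v := hkey u v
    have e2 : A' u v = c u * A u v := by
      have h1 : A' u v = A' v u := by
        have := congrFun (congrFun hsymm' u) v
        simpa [Matrix.transpose_apply] using this.symm
      have h2 : A v u = A u v := by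
        have := congrFun (congrFun hsymm u) v
        simpa [Matrix.transpose_apply] using this
      rw [h1, hkey v u, h2]
    have := e1.symm.trans e2
    exact (mul_right_cancel₀ hpos.ne' this).symm
  have hreach : ∀ u v : Fin n, c u = c v := by
    intro u v
    have hr : (SimpleGraph.fromRel fun u v => 0 < A u v).Reachable u v :=
      hconn.preconnected u v
    obtain ⟨w⟩ := hr
    induction w with
    | nil => rfl
    | cons h p ih => exact (hadj _ _ h).trans ih
  have h2 : 0 < n := by omega
  refine ⟨c ⟨0, h2⟩, hcpos _, ?_⟩
  ext i k
  rw [Matrix.smul_apply, smul_eq_mul, hkey i k, hreach ⟨0, h2⟩ k]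
end

section
/- Let G and G' be connected weighted graphs on the same vertex set {1,…,n}, n ≥ 2, with adjacency matrices A and A' and diagonal degree matrices D and D' (all degrees positive). If A D^{-1} = A' D'^{-1}, i.e. the two graphs have the same random walk transition matrix, then there exists a constant c > 0 such that A' = c·A. -/
open Matrix BigOperators

/-!
Equal transition matrices give `A' u v / d' v = A u v / d v`, i.e. `A' u v = r v * A u v` with
`r = d' / d`. Symmetry of both matrices then forces `r u = r v` along every edge of `A`, so `r`
is constant on the connected graph of `A`, and that constant is the scaling factor.
-/

theorem SimpleGraph.Reachable.apply_eq_of_adj {V α : Type*} {G : SimpleGraph V} {f : V → α}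
    (hf : ∀ u v, G.Adj u v → f u = f v) {u v : V} (h : G.Reachable u v) : f u = f v := by
  obtain ⟨p⟩ := h
  induction p with
  | nil => rfl
  | cons hadj _ ih => exact (hf _ _ hadj).trans ih

namespace Matrix

variable {ι K : Type*}

theorem IsSymm.apply_eq_of_apply_eq_mul [CommMonoidWithZero K] [IsRightCancelMulZero K]
    {A A' : Matrix ι ι K} (hA : A.IsSymm) (hA' : A'.IsSymm) {r : ι → K}
    (hr : ∀ u v, A' u v = r v * A u v) {u v : ι} (huv : A u v ≠ 0) : r u = r v := by
  have hsym : r v * A u v = r u * A u v := by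
    rw [← hr, ← hA'.apply u v, hr, hA.apply u v]
  exact (mul_right_cancel₀ huv hsym).symm

theorem apply_eq_div_mul_of_mul_diagonal_inv_eq [Fintype ι] [DecidableEq ι] [Field K]
    {A A' : Matrix ι ι K} {d d' : ι → K} (hd : ∀ v, d v ≠ 0) (hd' : ∀ v, d' v ≠ 0)
    (h : A * diagonal (fun v => (d v)⁻¹) = A' * diagonal (fun v => (d' v)⁻¹)) (u v : ι) :
    A' u v = d' v / d v * A u v := by
  have huv : A u v * (d v)⁻¹ = A' u v * (d' v)⁻¹ := by
    simpa only [mul_diagonal] using congrFun (congrFun h u) v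
  field_simp [hd v, hd' v] at huv ⊢
  linear_combination -huv

end Matrix

theorem stmt18_general {n : ℕ} (A A' : Matrix (Fin n) (Fin n) ℝ)
    (hsymm : A.IsSymm)
    (hconn : AdjConnected A) (hdeg : ∀ u, 0 < ∑ v, A u v)
    (hsymm' : A'.IsSymm) (hdeg' : ∀ u, 0 < ∑ v, A' u v)
    (hwalk : A * Matrix.diagonal (fun u => (∑ v, A u v)⁻¹)
           = A' * Matrix.diagonal (fun u => (∑ v, A' u v)⁻¹)) :
    ∃ c : ℝ, 0 < c ∧ A' = c • A := by
  set r : Fin n → ℝ := fun u => (∑ v, A' u v) / ∑ v, A u v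
  have hA' : ∀ u v, A' u v = r v * A u v :=
    apply_eq_div_mul_of_mul_diagonal_inv_eq (fun v => (hdeg v).ne') (fun v => (hdeg' v).ne') hwalk
  have hedge : ∀ u v, (SimpleGraph.fromRel fun a b => 0 < A a b).Adj u v → r u = r v := by
    rintro u v ⟨-, huv | hvu⟩
    · exact IsSymm.apply_eq_of_apply_eq_mul hsymm hsymm' hA' huv.ne'
    · exact (IsSymm.apply_eq_of_apply_eq_mul hsymm hsymm' hA' hvu.ne').symm
  obtain ⟨u₀⟩ := hconn.nonempty
  refine ⟨r u₀, div_pos (hdeg' u₀) (hdeg u₀), ?_⟩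
  ext u v
  rw [Matrix.smul_apply, smul_eq_mul, hA', (hconn.preconnected u₀ v).apply_eq_of_adj hedge]

/-- If two connected weighted graphs on the same vertex set (with all
weighted degrees positive) have the same random walk transition matrix `A D⁻¹`, then
their adjacency matrices agree up to a positive uniform scaling. -/
theorem stmt18 {n : ℕ} (hn : 2 ≤ n) (A A' : Matrix (Fin n) (Fin n) ℝ)
    (hsymm : A.IsSymm) (hnonneg : ∀ u v, 0 ≤ A u v) (hdiag : ∀ u, A u u = 0)
    (hconn : AdjConnected A) (hdeg : ∀ u, 0 < ∑ v, A u v)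
    (hsymm' : A'.IsSymm) (hnonneg' : ∀ u v, 0 ≤ A' u v) (hdiag' : ∀ u, A' u u = 0)
    (hconn' : AdjConnected A') (hdeg' : ∀ u, 0 < ∑ v, A' u v)
    (hwalk : A * Matrix.diagonal (fun u => (∑ v, A u v)⁻¹)
           = A' * Matrix.diagonal (fun u => (∑ v, A' u v)⁻¹)) :
    ∃ c : ℝ, 0 < c ∧ A' = c • A :=
  stmt18_general A A' hsymm hconn hdeg hsymm' hdeg' hwalk
end
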